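/- arXiv:2504.16458 — 3 statements merged into one kernel-verified Lean document; each statement's English description precedes it below -/
import Mathlib

section
/- Let V be a real vector space with dim V = 2n+1, let λ : V → ℝ be a linear functional and ω an alternating bilinear form on V such that the alternating (2n+1)-form λ ∧ ω^n is nonzero. Then there exists a unique vector R ∈ V with ι_R ω = 0 and λ(R) = 1. (Pointwise existence and uniqueness of the Reeb vector field defined by condition (1.12).) -/
open Module

variable {V : Type*} [AddCommGroup V] [Module ℝ V]

/-- The wedge product of a `p`-covector and a `q`-covector (given as real-valued functions on
tuples of vectors), with the standard determinant ("Alt") normalization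
`(α ∧ β)(v) = (p! q!)⁻¹ ∑_σ sgn(σ) · α(v_{σ(1)},…,v_{σ(p)}) · β(v_{σ(p+1)},…,v_{σ(p+q)})`. -/
noncomputable def wedgeF {p q : ℕ} (α : (Fin p → V) → ℝ) (β : (Fin q → V) → ℝ) :
    (Fin (p + q) → V) → ℝ :=
  fun v => ((p.factorial * q.factorial : ℕ) : ℝ)⁻¹ *
    ∑ σ : Equiv.Perm (Fin (p + q)),
      ((Equiv.Perm.sign σ : ℤ) : ℝ) *
        (α (fun i => v (σ (Fin.castAdd q i))) * β (fun j => v (σ (Fin.natAdd p j))))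

/-- The `n`-fold wedge power `ω^n = ω ∧ ⋯ ∧ ω` of a `2`-covector `ω`. -/
noncomputable def powF (ω2 : (Fin 2 → V) → ℝ) : (n : ℕ) → (Fin (2 * n) → V) → ℝ
  | 0 => fun _ => 1
  | n + 1 => fun v =>
      wedgeF ω2 (powF ω2 n) (fun i : Fin (2 + 2 * n) => v (Fin.cast (by omega) i))

/-- A linear functional viewed as a `1`-covector. -/
def oneF (lam : V →ₗ[ℝ] ℝ) : (Fin 1 → V) → ℝ := fun v => lam (v 0)

/-- A bilinear form viewed as a `2`-covector. -/
def twoF (ω : V →ₗ[ℝ] V →ₗ[ℝ] ℝ) : (Fin 2 → V) → ℝ := fun v => ω (v 0) (v 1)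

namespace ReebAux

/-- bilinear map as 2-multilinear map -/
def twoM (ω : V →ₗ[ℝ] V →ₗ[ℝ] ℝ) : MultilinearMap ℝ (fun _ : Fin 2 => V) ℝ where
  toFun v := ω (v 0) (v 1)
  map_update_add' {dec} v i x y := by
    have h10 : (1 : Fin 2) ≠ 0 := Fin.ne_of_val_ne (by norm_num)
    match i with
    | 0 => simp [Function.update_apply, h10]
    | 1 => simp [Function.update_apply, h10]
  map_update_smul' {dec} v i c x := by
    have h10 : (1 : Fin 2) ≠ 0 := Fin.ne_of_val_ne (by norm_num)
    match i with
    | 0 => simp [Function.update_apply, h10]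
    | 1 => simp [Function.update_apply, h10]

@[simp] lemma twoM_apply (ω : V →ₗ[ℝ] V →ₗ[ℝ] ℝ) (v : Fin 2 → V) :
    twoM ω v = ω (v 0) (v 1) := rfl

/-- product of two multilinear maps on concatenated domains -/
noncomputable def mulFinM {p q : ℕ} (A : MultilinearMap ℝ (fun _ : Fin p => V) ℝ)
    (B : MultilinearMap ℝ (fun _ : Fin q => V) ℝ) :
    MultilinearMap ℝ (fun _ : Fin (p + q) => V) ℝ :=
  ((TensorProduct.lid ℝ ℝ).toLinearMap.compMultilinearMap (A.domCoprod B)).domDomCongr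
    finSumFinEquiv

lemma mulFinM_apply {p q : ℕ} (A : MultilinearMap ℝ (fun _ : Fin p => V) ℝ)
    (B : MultilinearMap ℝ (fun _ : Fin q => V) ℝ) (v : Fin (p + q) → V) :
    mulFinM A B v = A (fun i => v (Fin.castAdd q i)) * B (fun j => v (Fin.natAdd p j)) := by
  simp [mulFinM, MultilinearMap.domDomCongr_apply, TensorProduct.lid_tmul, smul_eq_mul]

/-- the n-th power as a multilinear map -/
noncomputable def powM (W : MultilinearMap ℝ (fun _ : Fin 2 => V) ℝ) :
    (n : ℕ) → MultilinearMap ℝ (fun _ : Fin (2 * n) => V) ℝ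
  | 0 =>
      haveI : IsEmpty (Fin (2 * 0)) := ⟨fun i => absurd i.2 (by omega)⟩
      MultilinearMap.constOfIsEmpty ℝ _ 1
  | n + 1 =>
      ((((Nat.factorial 2 * Nat.factorial (2 * n) : ℕ) : ℝ)⁻¹ •
        (MultilinearMap.alternatization (mulFinM W (powM W n))).toMultilinearMap).domDomCongr
        (finCongr (by omega : 2 + 2 * n = 2 * (n + 1))))

omit [AddCommGroup V] [Module ℝ V] in
lemma powF_succ (ω2 : (Fin 2 → V) → ℝ) (n : ℕ) (v : Fin (2 * (n + 1)) → V) :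
    powF ω2 (n + 1) v =
      wedgeF ω2 (powF ω2 n) (fun i : Fin (2 + 2 * n) => v (Fin.cast (by omega) i)) := rfl

lemma wedge_eq {p q : ℕ} (A : MultilinearMap ℝ (fun _ : Fin p => V) ℝ)
    (B : MultilinearMap ℝ (fun _ : Fin q => V) ℝ) :
    wedgeF ⇑A ⇑B = fun v => ((p.factorial * q.factorial : ℕ) : ℝ)⁻¹ *
      (MultilinearMap.alternatization (mulFinM A B) v) := by
  funext v
  rw [wedgeF, MultilinearMap.alternatization_apply]
  congr 1
  refine Finset.sum_congr rfl fun σ _ => ?_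
  rw [MultilinearMap.domDomCongr_apply, mulFinM_apply]
  rw [Units.smul_def, zsmul_eq_mul]

lemma powF_eq (W : MultilinearMap ℝ (fun _ : Fin 2 => V) ℝ) :
    ∀ n, powF ⇑W n = ⇑(powM W n)
  | 0 => by
      funext v
      simp [powF, powM]
  | n + 1 => by
      funext v
      rw [powF_succ, powF_eq W n, wedge_eq]
      simp [powM, MultilinearMap.domDomCongr_apply, MultilinearMap.smul_apply, smul_eq_mul]

lemma fin_cases_add {p q : ℕ} (k : Fin (p + q)) :
    (∃ a : Fin p, k = Fin.castAdd q a) ∨ (∃ b : Fin q, k = Fin.natAdd p b) := by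
  by_cases h : (k : ℕ) < p
  · exact Or.inl ⟨⟨k, h⟩, by simp [Fin.ext_iff]⟩
  · refine Or.inr ⟨⟨(k : ℕ) - p, by omega⟩, ?_⟩
    have := k.2
    simp [Fin.ext_iff]
    omega

section vanish

variable (ω : V →ₗ[ℝ] V →ₗ[ℝ] ℝ) (halt : ∀ v, ω v v = 0)

include halt in
lemma skew (x y : V) : ω x y = - ω y x := by
  have h := halt (x + y)
  simp only [map_add, LinearMap.add_apply, halt] at h
  linarith

variable {u : V} (hu : ∀ x, ω u x = 0)

include halt hu in
lemma powF_eq_zero : ∀ (n : ℕ) (v : Fin (2 * n) → V), (∃ i, v i = u) →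
    powF (twoF ω) n v = 0 := by
  intro n
  induction n with
  | zero =>
      rintro v ⟨i, -⟩
      exact absurd i.2 (by omega)
  | succ n ih =>
      rintro v ⟨i, hi⟩
      rw [powF_succ]
      simp only [wedgeF]
      rw [Finset.sum_eq_zero, mul_zero]
      intro σ _
      set w : Fin (2 + 2 * n) → V := fun j => v (Fin.cast (by omega) j) with hw
      set i' : Fin (2 + 2 * n) := Fin.cast (by omega) i with hi'
      have hwi : w i' = u := hi
      have hcase := fin_cases_add (σ.symm i')
      rcases hcase with ⟨a, ha⟩ | ⟨b, hb⟩
      · have hσ : σ (Fin.castAdd (2 * n) a) = i' := by rw [← ha]; simp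
        have ha2 : a = 0 ∨ a = 1 := by
          simp only [Fin.ext_iff, Fin.val_zero, Fin.val_one]
          omega
        rcases ha2 with rfl | rfl
        · have : twoF ω (fun j => w (σ (Fin.castAdd (2 * n) j))) = 0 := by
            rw [twoF]
            simp only [hσ, hwi]
            exact hu _
          rw [this]; ring
        · have : twoF ω (fun j => w (σ (Fin.castAdd (2 * n) j))) = 0 := by
            rw [twoF]
            simp only [hσ, hwi]
            rw [skew ω halt]
            rw [hu]; ring
          rw [this]; ring
      · have hσ : σ (Fin.natAdd 2 b) = i' := by rw [← hb]; simp
        have : powF (twoF ω) n (fun j => w (σ (Fin.natAdd 2 j))) = 0 := by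
          refine ih _ ⟨b, ?_⟩
          rw [hσ, hwi]
        rw [this]; ring

end vanish

lemma F_eq_zero [FiniteDimensional ℝ V] (n : ℕ) (hdim : finrank ℝ V = 2 * n + 1)
    (lam : V →ₗ[ℝ] ℝ) (ω : V →ₗ[ℝ] V →ₗ[ℝ] ℝ) (halt : ∀ v, ω v v = 0)
    {u : V} (hu : ∀ x, ω u x = 0) (hlu : lam u = 0) (hu0 : u ≠ 0) :
    wedgeF (oneF lam) (powF (twoF ω) n) = 0 := by
  classical
  have honef : oneF lam = ⇑(MultilinearMap.ofSubsingleton ℝ V ℝ (0 : Fin 1) lam) := rfl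
  have htwof : twoF ω = ⇑(twoM ω) := rfl
  set lamM := MultilinearMap.ofSubsingleton ℝ V ℝ (0 : Fin 1) lam with hlamM
  set G := MultilinearMap.alternatization (mulFinM lamM (powM (twoM ω) n)) with hG
  have hli : LinearIndepOn ℝ id ({u} : Set V) := (linearIndepOn_singleton_iff ℝ).mpr hu0
  let s' := hli.extend (Set.subset_univ _)
  let b : Basis s' ℝ V := Module.Basis.extend hli
  haveI : Fintype s' := FiniteDimensional.fintypeBasisIndex b
  have hcard : Fintype.card s' = 1 + 2 * n := by
    rw [← Module.finrank_eq_card_basis b, hdim]; omega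
  let φ : s' ≃ Fin (1 + 2 * n) := Fintype.equivFinOfCardEq hcard
  let e : Basis (Fin (1 + 2 * n)) ℝ V := b.reindex φ
  have hus : u ∈ s' := hli.subset_extend _ rfl
  set i₀ : Fin (1 + 2 * n) := φ ⟨u, hus⟩ with hi₀
  have he : e i₀ = u := by
    rw [Module.Basis.reindex_apply, hi₀, Equiv.symm_apply_apply]
    exact Basis.extend_apply_self hli _
  have hGe : G ⇑e = 0 := by
    rw [hG, MultilinearMap.alternatization_apply]
    refine Finset.sum_eq_zero fun σ _ => ?_
    rw [MultilinearMap.domDomCongr_apply, mulFinM_apply]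
    rcases fin_cases_add (σ.symm i₀) with ⟨a, ha⟩ | ⟨b', hb⟩
    · have ha0 : a = 0 := Subsingleton.elim _ _
      have hσ : σ (Fin.castAdd (2 * n) (0 : Fin 1)) = i₀ := by
        rw [← ha0, ← ha, Equiv.apply_symm_apply]
      have hl : lamM (fun i => e (σ (Fin.castAdd (2 * n) i))) = 0 := by
        show lam (e (σ (Fin.castAdd (2 * n) (0 : Fin 1)))) = 0
        rw [hσ, he, hlu]
      rw [hl, zero_mul, smul_zero]
    · have hσ : σ (Fin.natAdd 1 b') = i₀ := by rw [← hb, Equiv.apply_symm_apply]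
      have hp : (powM (twoM ω) n) (fun j => e (σ (Fin.natAdd 1 j))) = 0 := by
        rw [← powF_eq]
        exact powF_eq_zero ω halt hu n _ ⟨b', by rw [hσ, he]⟩
      rw [hp, mul_zero, smul_zero]
  have hGz : G = 0 := by
    rw [G.eq_smul_basis_det e, hGe, zero_smul]
  funext v
  simp only [honef, htwof, powF_eq, wedge_eq, ← hlamM, ← hG, hGz]
  simp

lemma exists_radical [FiniteDimensional ℝ V] (n : ℕ) (hdim : finrank ℝ V = 2 * n + 1)
    (ω : V →ₗ[ℝ] V →ₗ[ℝ] ℝ) (halt : ∀ v, ω v v = 0) :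
    ∃ u : V, u ≠ 0 ∧ ∀ x, ω u x = 0 := by
  classical
  let b : Basis (Fin (2 * n + 1)) ℝ V := (finBasis ℝ V).reindex (finCongr hdim)
  let M : Matrix (Fin (2 * n + 1)) (Fin (2 * n + 1)) ℝ := Matrix.of fun i j => ω (b i) (b j)
  have hskew : M.transpose = -M := by
    ext i j
    show ω (b j) (b i) = -(ω (b i) (b j))
    exact skew ω halt _ _
  have hdet : M.det = 0 := by
    have h1 : M.det = (-M).det := by rw [← hskew, Matrix.det_transpose]
    rw [Matrix.det_neg, Fintype.card_fin, Odd.neg_one_pow ⟨n, by ring⟩] at h1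
    linarith
  obtain ⟨c, hc0, hc⟩ := Matrix.exists_vecMul_eq_zero_iff.mpr hdet
  refine ⟨∑ i, c i • b i, ?_, ?_⟩
  · intro h
    apply hc0
    have hr := b.repr_sum_self c
    rw [h, map_zero] at hr
    simpa using hr.symm
  · intro x
    have hωz : ω (∑ i, c i • b i) = 0 := by
      apply b.ext
      intro j
      have hcj := congrFun hc j
      simp only [Matrix.vecMul, dotProduct, M, Matrix.of_apply, Pi.zero_apply] at hcj
      simp only [map_sum, map_smul, LinearMap.sum_apply, LinearMap.smul_apply, smul_eq_mul,
        LinearMap.zero_apply]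
      exact hcj
    rw [hωz, LinearMap.zero_apply]

end ReebAux

/-- **Pointwise existence and uniqueness of the Reeb vector (condition (1.12)).**
If `dim V = 2n+1` and the `(2n+1)`-covector `λ ∧ ω^n` is nonzero, then there is a unique
`R ∈ V` with `ι_R ω = 0` and `λ(R) = 1`. -/
theorem reeb_vector_existsUnique
    [FiniteDimensional ℝ V] (n : ℕ) (hdim : finrank ℝ V = 2 * n + 1)
    (lam : V →ₗ[ℝ] ℝ) (ω : V →ₗ[ℝ] V →ₗ[ℝ] ℝ) (halt : ∀ v, ω v v = 0)
    (hvol : wedgeF (oneF lam) (powF (twoF ω) n) ≠ 0) :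
    ∃! R : V, (∀ v : V, ω R v = 0) ∧ lam R = 1 := by
  have key : ∀ u : V, (∀ x, ω u x = 0) → lam u = 0 → u = 0 := by
    intro u hu hlu
    by_contra hu0
    exact hvol (ReebAux.F_eq_zero n hdim lam ω halt hu hlu hu0)
  obtain ⟨u₀, hu₀0, hu₀⟩ := ReebAux.exists_radical n hdim ω halt
  have hl0 : lam u₀ ≠ 0 := fun h => hu₀0 (key u₀ hu₀ h)
  refine ⟨(lam u₀)⁻¹ • u₀, ⟨?_, ?_⟩, ?_⟩
  · intro v
    rw [map_smul, LinearMap.smul_apply, hu₀ v, smul_zero]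
  · rw [map_smul, smul_eq_mul, inv_mul_cancel₀ hl0]
  · rintro y ⟨hy1, hy2⟩
    have h1 : ∀ x, ω (y - (lam u₀)⁻¹ • u₀) x = 0 := by
      intro x
      rw [map_sub, LinearMap.sub_apply, hy1 x, map_smul, LinearMap.smul_apply, hu₀ x,
        smul_zero, sub_zero]
    have h2 : lam (y - (lam u₀)⁻¹ • u₀) = 0 := by
      rw [map_sub, hy2, map_smul, smul_eq_mul, inv_mul_cancel₀ hl0, sub_self]
    exact sub_eq_zero.mp (key _ h1 h2)
end

section
/- Let V be a real vector space with dim V = 2n+1, let λ : V → ℝ be a linear functional and ω an alternating bilinear form on V with λ ∧ ω^n ≠ 0. Let T : V → V be a linear map, f > 0 a real number, and β ∈ V* a linear functional such that T*λ = f·λ and T*ω = β ∧ λ + f·ω. If T*(λ ∧ ω^n) = λ ∧ ω^n, then f = 1 and T*λ = λ. (The pointwise form of Lemma 3.5 / Lemma 1.11: a contactomorphism preserving the contact volume form is a strict contactomorphism, i.e. Cont(M,λ) ∩ Diff(M,μ_λ) = Cont^st(M,λ).) -/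
open Module

variable {V : Type*} [AddCommGroup V] [Module ℝ V]

namespace SCaux

/-- index `0` in `Fin (1+2n)` -/
def zI (n : ℕ) : Fin (1 + 2*n) := ⟨0, by omega⟩
/-- index `2i+1` in `Fin (1+2n)` -/
def aI (n : ℕ) (i : Fin n) : Fin (1 + 2*n) := ⟨2*i.1+1, by have := i.2; omega⟩
/-- index `2i+2` in `Fin (1+2n)` -/
def bI (n : ℕ) (i : Fin n) : Fin (1 + 2*n) := ⟨2*i.1+2, by have := i.2; omega⟩
/-- index `2i` in `Fin (2n)` -/
def cI (n : ℕ) (i : Fin n) : Fin (2*n) := ⟨2*i.1, by have := i.2; omega⟩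
/-- index `2i+1` in `Fin (2n)` -/
def dI (n : ℕ) (i : Fin n) : Fin (2*n) := ⟨2*i.1+1, by have := i.2; omega⟩

lemma aI_ne_zI (n : ℕ) (i : Fin n) : aI n i ≠ zI n := by
  simp [aI, zI, Fin.ext_iff]
lemma bI_ne_zI (n : ℕ) (i : Fin n) : bI n i ≠ zI n := by
  simp [bI, zI, Fin.ext_iff]
lemma aI_ne_bI (n : ℕ) (i j : Fin n) : aI n i ≠ bI n j := by
  simp only [aI, bI, ne_eq, Fin.mk.injEq]; omega
lemma aI_inj (n : ℕ) {i j : Fin n} (h : i ≠ j) : aI n i ≠ aI n j := by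
  simp only [aI, ne_eq, Fin.mk.injEq]
  exact fun hc => h (Fin.ext (by omega))
lemma bI_inj (n : ℕ) {i j : Fin n} (h : i ≠ j) : bI n i ≠ bI n j := by
  simp only [bI, ne_eq, Fin.mk.injEq]
  exact fun hc => h (Fin.ext (by omega))

/-- closed formula for `λ ∧ ω^n` (fully antisymmetrized, up to `2⁻ⁿ`) -/
noncomputable def bigL (lam : V → ℝ) (ω : V → V → ℝ) (n : ℕ) (w : Fin (1 + 2*n) → V) : ℝ :=
  ∑ σ : Equiv.Perm (Fin (1 + 2*n)), ((Equiv.Perm.sign σ : ℤ) : ℝ) *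
    (lam (w (σ (zI n))) * ∏ i : Fin n, ω (w (σ (aI n i))) (w (σ (bI n i))))

/-- closed formula for `ω^n` (fully antisymmetrized, up to `2⁻ⁿ`) -/
noncomputable def bigP (ω : V → V → ℝ) (n : ℕ) (u : Fin (2*n) → V) : ℝ :=
  ∑ σ : Equiv.Perm (Fin (2*n)), ((Equiv.Perm.sign σ : ℤ) : ℝ) *
    ∏ i : Fin n, ω (u (σ (cI n i))) (u (σ (dI n i)))

lemma mul_swap_apply_of_ne {m : ℕ} (σ : Equiv.Perm (Fin m)) (x y k : Fin m)
    (h1 : k ≠ x) (h2 : k ≠ y) : (σ * Equiv.swap x y) k = σ k := by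
  simp [Equiv.Perm.mul_apply, Equiv.swap_apply_of_ne_of_ne h1 h2]

/-- full antisymmetrization of something invariant under a transposition vanishes -/
lemma sum_perm_swap_zero {m : ℕ} (x y : Fin m) (hxy : x ≠ y) (X : Equiv.Perm (Fin m) → ℝ)
    (hX : ∀ σ, X (σ * Equiv.swap x y) = X σ) :
    ∑ σ : Equiv.Perm (Fin m), ((Equiv.Perm.sign σ : ℤ) : ℝ) * X σ = 0 := by
  have key : (∑ σ : Equiv.Perm (Fin m), ((Equiv.Perm.sign σ : ℤ) : ℝ) * X σ)
      = -∑ σ : Equiv.Perm (Fin m), ((Equiv.Perm.sign σ : ℤ) : ℝ) * X σ := by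
    nth_rewrite 1 [← Fintype.sum_equiv (Equiv.mulRight (Equiv.swap x y))
      (fun σ => ((Equiv.Perm.sign (σ * Equiv.swap x y) : ℤ) : ℝ) * X (σ * Equiv.swap x y))
      (fun σ => ((Equiv.Perm.sign σ : ℤ) : ℝ) * X σ) (fun σ => rfl)]
    rw [← Finset.sum_neg_distrib]
    refine Finset.sum_congr rfl fun σ _ => ?_
    rw [hX, Equiv.Perm.sign_mul, Equiv.Perm.sign_swap hxy]
    push_cast
    ring
  linarith

/-- embedding of `Perm (Fin q)` into `Perm (Fin (p+q))` acting on the last `q` coordinates -/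
def emb (p q : ℕ) (τ : Equiv.Perm (Fin q)) : Equiv.Perm (Fin (p + q)) :=
  (finSumFinEquiv (m := p) (n := q)).permCongr (Equiv.sumCongr (Equiv.refl (Fin p)) τ)

lemma emb_castAdd (p q : ℕ) (τ : Equiv.Perm (Fin q)) (i : Fin p) :
    emb p q τ (Fin.castAdd q i) = Fin.castAdd q i := by
  simp [emb, Equiv.permCongr_apply, finSumFinEquiv_symm_apply_castAdd]

lemma emb_natAdd (p q : ℕ) (τ : Equiv.Perm (Fin q)) (j : Fin q) :
    emb p q τ (Fin.natAdd p j) = Fin.natAdd p (τ j) := by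
  simp [emb, Equiv.permCongr_apply, finSumFinEquiv_symm_apply_natAdd]

lemma sign_emb (p q : ℕ) (τ : Equiv.Perm (Fin q)) :
    Equiv.Perm.sign (emb p q τ) = Equiv.Perm.sign τ := by
  rw [emb, Equiv.Perm.sign_permCongr, Equiv.Perm.sign_sumCongr]
  simp

lemma collapse (p q : ℕ) (H : Equiv.Perm (Fin (p + q)) → ℝ) :
    ∑ σ : Equiv.Perm (Fin (p + q)), ∑ τ : Equiv.Perm (Fin q), H (σ * emb p q τ)
      = (q.factorial : ℝ) * ∑ ρ : Equiv.Perm (Fin (p + q)), H ρ := by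
  rw [Finset.sum_comm]
  have h1 : ∀ τ : Equiv.Perm (Fin q),
      ∑ σ : Equiv.Perm (Fin (p + q)), H (σ * emb p q τ)
        = ∑ ρ : Equiv.Perm (Fin (p + q)), H ρ :=
    fun τ => Fintype.sum_equiv (Equiv.mulRight (emb p q τ)) _ _ (fun σ => rfl)
  rw [Finset.sum_congr rfl fun τ _ => h1 τ, Finset.sum_const]
  simp [Fintype.card_perm, mul_comm]



lemma powF_eq (ω : V →ₗ[ℝ] V →ₗ[ℝ] ℝ) :
    ∀ n (u : Fin (2*n) → V),
      powF (twoF ω) n u = (2:ℝ)⁻¹^n * bigP (fun x y => ω x y) n u := by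
  intro n
  induction n with
  | zero =>
      intro u
      simp [powF, bigP]
  | succ n ih =>
      intro u
      rw [powF]; unfold wedgeF; beta_reduce
      set u' : Fin (2 + 2*n) → V := fun i => u (Fin.cast (by omega) i) with hu'
      set H : Equiv.Perm (Fin (2 + 2*n)) → ℝ := fun ρ =>
        ((Equiv.Perm.sign ρ : ℤ) : ℝ) *
          (ω (u' (ρ (Fin.castAdd (2*n) (0 : Fin 2)))) (u' (ρ (Fin.castAdd (2*n) (1 : Fin 2)))) *
            ∏ i : Fin n, ω (u' (ρ (Fin.natAdd 2 (cI n i)))) (u' (ρ (Fin.natAdd 2 (dI n i)))))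
        with hH
      have step1 : ∀ σ : Equiv.Perm (Fin (2 + 2*n)),
          ((Equiv.Perm.sign σ : ℤ) : ℝ) *
            (twoF ω (fun i => u' (σ (Fin.castAdd (2*n) i))) *
              powF (twoF ω) n (fun j => u' (σ (Fin.natAdd 2 j))))
          = (2:ℝ)⁻¹^n * ∑ τ : Equiv.Perm (Fin (2*n)), H (σ * emb 2 (2*n) τ) := by
        intro σ
        rw [ih, bigP]
        simp only [Finset.mul_sum]
        refine Finset.sum_congr rfl fun τ _ => ?_
        have hsgn : ((Equiv.Perm.sign (σ * emb 2 (2*n) τ) : ℤ) : ℝ)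
            = ((Equiv.Perm.sign σ : ℤ) : ℝ) * ((Equiv.Perm.sign τ : ℤ) : ℝ) := by
          rw [Equiv.Perm.sign_mul, sign_emb]; push_cast; ring
        rw [hH]
        simp only [Equiv.Perm.mul_apply, emb_castAdd, emb_natAdd, hsgn, twoF]
        ring
      rw [Finset.sum_congr rfl fun σ _ => step1 σ, ← Finset.mul_sum, collapse]
      have step2 : (∑ ρ : Equiv.Perm (Fin (2 + 2*n)), H ρ)
          = bigP (fun x y => ω x y) (n+1) u := by
        rw [bigP]
        refine Fintype.sum_equiv (Equiv.permCongr (finCongr (by omega : 2 + 2*n = 2*(n+1)))) _ _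
          (fun ρ => ?_)
        have key : ∀ (x : Fin (2 + 2*n)) (y : Fin (2*(n+1))), (x : ℕ) = (y : ℕ) →
            u ((Equiv.permCongr (finCongr (by omega : 2 + 2*n = 2*(n+1))) ρ) y) = u' (ρ x) := by
          intro x y h
          have hxy : Fin.cast (by omega : 2*(n+1) = 2 + 2*n) y = x := Fin.ext h.symm
          simp only [Equiv.permCongr_apply, finCongr_apply, finCongr_symm_apply, hu', hxy]
        have hfac : ∀ (x1 x2 : Fin (2 + 2*n)) (y1 y2 : Fin (2*(n+1))),
            (x1 : ℕ) = (y1 : ℕ) → (x2 : ℕ) = (y2 : ℕ) →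
            ω (u ((Equiv.permCongr (finCongr (by omega : 2 + 2*n = 2*(n+1))) ρ) y1))
              (u ((Equiv.permCongr (finCongr (by omega : 2 + 2*n = 2*(n+1))) ρ) y2))
            = ω (u' (ρ x1)) (u' (ρ x2)) := by
          intro x1 x2 y1 y2 h1 h2
          rw [key x1 y1 h1, key x2 y2 h2]
        rw [hH, Equiv.Perm.sign_permCongr]
        rw [Fin.prod_univ_succ]
        rw [hfac (Fin.castAdd (2*n) (0 : Fin 2)) (Fin.castAdd (2*n) (1 : Fin 2))
              (cI (n+1) 0) (dI (n+1) 0) (by simp [cI]) (by simp [dI]; exact (Nat.mod_eq_of_lt (by omega)).symm)]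
        exact congrArg₂ (fun a b => (((Equiv.Perm.sign ρ :ℤ):ℝ)) * (a * b)) rfl
          (Finset.prod_congr rfl (fun i _ =>
            (hfac (Fin.natAdd 2 (cI n i)) (Fin.natAdd 2 (dI n i))
              (cI (n+1) i.succ) (dI (n+1) i.succ)
              (by simp [cI]; omega) (by simp [dI]; omega)).symm))
      rw [step2]
      have h2 : ((Nat.factorial 2 * (2*n).factorial : ℕ) : ℝ) ≠ 0 := by
        positivity
      field_simp
      push_cast; ring

lemma wedge_eq (lam : V →ₗ[ℝ] ℝ) (ω : V →ₗ[ℝ] V →ₗ[ℝ] ℝ) (n : ℕ) (w : Fin (1 + 2*n) → V) :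
    wedgeF (oneF lam) (powF (twoF ω) n) w
      = (2:ℝ)⁻¹^n * bigL (fun x => lam x) (fun x y => ω x y) n w := by
  unfold wedgeF; beta_reduce
  set H : Equiv.Perm (Fin (1 + 2*n)) → ℝ := fun ρ =>
    ((Equiv.Perm.sign ρ : ℤ) : ℝ) *
      (lam (w (ρ (Fin.castAdd (2*n) (0 : Fin 1)))) *
        ∏ i : Fin n, ω (w (ρ (Fin.natAdd 1 (cI n i)))) (w (ρ (Fin.natAdd 1 (dI n i)))))
    with hH
  have step1 : ∀ σ : Equiv.Perm (Fin (1 + 2*n)),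
      ((Equiv.Perm.sign σ : ℤ) : ℝ) *
        (oneF lam (fun i => w (σ (Fin.castAdd (2*n) i))) *
          powF (twoF ω) n (fun j => w (σ (Fin.natAdd 1 j))))
      = (2:ℝ)⁻¹^n * ∑ τ : Equiv.Perm (Fin (2*n)), H (σ * emb 1 (2*n) τ) := by
    intro σ
    rw [powF_eq ω n, bigP]
    simp only [Finset.mul_sum]
    refine Finset.sum_congr rfl fun τ _ => ?_
    have hsgn : ((Equiv.Perm.sign (σ * emb 1 (2*n) τ) : ℤ) : ℝ)
        = ((Equiv.Perm.sign σ : ℤ) : ℝ) * ((Equiv.Perm.sign τ : ℤ) : ℝ) := by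
      rw [Equiv.Perm.sign_mul, sign_emb]; push_cast; ring
    rw [hH]
    simp only [Equiv.Perm.mul_apply, emb_castAdd, emb_natAdd, hsgn, oneF]
    ring
  rw [Finset.sum_congr rfl fun σ _ => step1 σ, ← Finset.mul_sum, collapse]
  have step2 : (∑ ρ : Equiv.Perm (Fin (1 + 2*n)), H ρ)
      = bigL (fun x => lam x) (fun x y => ω x y) n w := by
    rw [bigL]
    refine Finset.sum_congr rfl fun ρ _ => ?_
    rw [hH]
    rw [show Fin.castAdd (2*n) (0 : Fin 1) = zI n from Fin.ext (by simp [zI])]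
    refine congrArg (fun b => (((Equiv.Perm.sign ρ : ℤ):ℝ)) * (lam (w (ρ (zI n))) * b))
      (Finset.prod_congr rfl (fun i _ => ?_))
    rw [show Fin.natAdd 1 (cI n i) = aI n i from Fin.ext (by simp [cI, aI]; omega),
        show Fin.natAdd 1 (dI n i) = bI n i from Fin.ext (by simp [dI, bI]; omega)]
  rw [step2]
  have h2 : ((Nat.factorial 1 * (2*n).factorial : ℕ) : ℝ) ≠ 0 := by positivity
  field_simp
  rw [Nat.factorial_one, one_mul]



lemma prod_expand {n : ℕ} (P Q C : Fin n → ℝ) :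
    (∏ i, (P i - Q i + C i))
      = ∑ t ∈ (Finset.univ : Finset (Fin n)).powerset, ∑ q ∈ t.powerset,
          ((∏ i ∈ q, P i) * (∏ i ∈ t \ q, -(Q i))) * (∏ i ∈ Finset.univ \ t, C i) := by
  classical
  calc (∏ i, (P i - Q i + C i)) = ∏ i, ((P i + -(Q i)) + C i) := by
        refine Finset.prod_congr rfl fun i _ => by ring
    _ = ∑ t ∈ (Finset.univ : Finset (Fin n)).powerset,
          (∏ i ∈ t, (P i + -(Q i))) * ∏ i ∈ Finset.univ \ t, C i :=
        Finset.prod_add _ _ _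
    _ = _ := by
        refine Finset.sum_congr rfl fun t _ => ?_
        rw [Finset.prod_add, Finset.sum_mul]

lemma bigL_expand (lam βf : V → ℝ) (ω : V → V → ℝ) (f : ℝ) (n : ℕ) (w : Fin (1 + 2*n) → V) :
    bigL lam (fun x y => βf x * lam y - βf y * lam x + f * ω x y) n w
      = f^n * bigL lam ω n w := by
  classical
  have reshape : bigL lam (fun x y => βf x * lam y - βf y * lam x + f * ω x y) n w
      = ∑ t ∈ (Finset.univ : Finset (Fin n)).powerset, ∑ q ∈ t.powerset,
          ∑ σ : Equiv.Perm (Fin (1 + 2*n)), ((Equiv.Perm.sign σ : ℤ) : ℝ) *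
            (lam (w (σ (zI n))) *
              (((∏ i ∈ q, βf (w (σ (aI n i))) * lam (w (σ (bI n i)))) *
                (∏ i ∈ t \ q, -(βf (w (σ (bI n i))) * lam (w (σ (aI n i)))))) *
                (∏ i ∈ Finset.univ \ t, f * ω (w (σ (aI n i))) (w (σ (bI n i)))))) := by
    unfold bigL
    rw [show (∑ σ : Equiv.Perm (Fin (1 + 2*n)), ((Equiv.Perm.sign σ : ℤ) : ℝ) *
        (lam (w (σ (zI n))) * ∏ i : Fin n,
          (βf (w (σ (aI n i))) * lam (w (σ (bI n i)))
            - βf (w (σ (bI n i))) * lam (w (σ (aI n i)))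
            + f * ω (w (σ (aI n i))) (w (σ (bI n i))))))
      = ∑ σ : Equiv.Perm (Fin (1 + 2*n)),
          ∑ t ∈ (Finset.univ : Finset (Fin n)).powerset, ∑ q ∈ t.powerset,
            ((Equiv.Perm.sign σ : ℤ) : ℝ) *
            (lam (w (σ (zI n))) *
              (((∏ i ∈ q, βf (w (σ (aI n i))) * lam (w (σ (bI n i)))) *
                (∏ i ∈ t \ q, -(βf (w (σ (bI n i))) * lam (w (σ (aI n i)))))) *
                (∏ i ∈ Finset.univ \ t, f * ω (w (σ (aI n i))) (w (σ (bI n i))))))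
      from Finset.sum_congr rfl fun σ _ => by
        rw [prod_expand]; simp only [Finset.mul_sum]]
    rw [Finset.sum_comm]
    exact Finset.sum_congr rfl fun t _ => Finset.sum_comm
  rw [reshape]
  rw [Finset.sum_eq_single_of_mem (∅ : Finset (Fin n)) (Finset.mem_powerset.mpr (Finset.empty_subset _))
    ?side]
  · -- main term t = ∅
    rw [Finset.powerset_empty, Finset.sum_singleton]
    unfold bigL
    rw [Finset.mul_sum]
    refine Finset.sum_congr rfl fun σ _ => ?_
    simp only [Finset.prod_empty, Finset.sdiff_empty, Finset.sdiff_self]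
    rw [Finset.prod_mul_distrib, Finset.prod_const, Finset.card_univ, Fintype.card_fin]
    ring
  · -- vanishing terms
    intro t _ ht
    obtain ⟨j, hj⟩ := Finset.nonempty_of_ne_empty ht
    refine Finset.sum_eq_zero fun q hq => ?_
    have hqt : q ⊆ t := Finset.mem_powerset.mp hq
    by_cases hjq : j ∈ q
    · -- λ sits at positions zI and bI j : swap them
      refine sum_perm_swap_zero (zI n) (bI n j) (Ne.symm (bI_ne_zI n j)) _ (fun σ => ?_)
      have h1 : ∀ k : Fin (1 + 2*n), k ≠ zI n → k ≠ bI n j →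
          (σ * Equiv.swap (zI n) (bI n j)) k = σ k := fun k => mul_swap_apply_of_ne σ _ _ k
      have hz : (σ * Equiv.swap (zI n) (bI n j)) (zI n) = σ (bI n j) := by
        simp [Equiv.Perm.mul_apply]
      have hb : (σ * Equiv.swap (zI n) (bI n j)) (bI n j) = σ (zI n) := by
        simp [Equiv.Perm.mul_apply]
      have ha : (σ * Equiv.swap (zI n) (bI n j)) (aI n j) = σ (aI n j) :=
        h1 _ (aI_ne_zI n j) (aI_ne_bI n j j)
      rw [← Finset.mul_prod_erase q
            (fun i => βf (w ((σ * Equiv.swap (zI n) (bI n j)) (aI n i))) *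
              lam (w ((σ * Equiv.swap (zI n) (bI n j)) (bI n i)))) hjq,
          ← Finset.mul_prod_erase q
            (fun i => βf (w (σ (aI n i))) * lam (w (σ (bI n i)))) hjq]
      have hq' : (∏ i ∈ q.erase j, βf (w ((σ * Equiv.swap (zI n) (bI n j)) (aI n i))) *
            lam (w ((σ * Equiv.swap (zI n) (bI n j)) (bI n i))))
          = ∏ i ∈ q.erase j, βf (w (σ (aI n i))) * lam (w (σ (bI n i))) := by
        refine Finset.prod_congr rfl fun i hi => ?_
        have hij : i ≠ j := (Finset.mem_erase.mp hi).1
        rw [h1 _ (aI_ne_zI n i) (aI_ne_bI n i j), h1 _ (bI_ne_zI n i) (bI_inj n hij)]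
      have hq2 : (∏ i ∈ t \ q, -(βf (w ((σ * Equiv.swap (zI n) (bI n j)) (bI n i))) *
            lam (w ((σ * Equiv.swap (zI n) (bI n j)) (aI n i)))))
          = ∏ i ∈ t \ q, -(βf (w (σ (bI n i))) * lam (w (σ (aI n i)))) := by
        refine Finset.prod_congr rfl fun i hi => ?_
        have hij : i ≠ j := fun h => ((Finset.mem_sdiff.mp hi).2 (h ▸ hjq))
        rw [h1 _ (aI_ne_zI n i) (aI_ne_bI n i j), h1 _ (bI_ne_zI n i) (bI_inj n hij)]
      have hq3 : (∏ i ∈ Finset.univ \ t, f * ω (w ((σ * Equiv.swap (zI n) (bI n j)) (aI n i)))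
            (w ((σ * Equiv.swap (zI n) (bI n j)) (bI n i))))
          = ∏ i ∈ Finset.univ \ t, f * ω (w (σ (aI n i))) (w (σ (bI n i))) := by
        refine Finset.prod_congr rfl fun i hi => ?_
        have hij : i ≠ j := fun h => ((Finset.mem_sdiff.mp hi).2 (h ▸ hqt hjq))
        rw [h1 _ (aI_ne_zI n i) (aI_ne_bI n i j), h1 _ (bI_ne_zI n i) (bI_inj n hij)]
      rw [hq', hq2, hq3, hz, hb, ha]
      ring
    · -- λ sits at positions zI and aI j : swap them
      have hjtq : j ∈ t \ q := Finset.mem_sdiff.mpr ⟨hj, hjq⟩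
      refine sum_perm_swap_zero (zI n) (aI n j) (Ne.symm (aI_ne_zI n j)) _ (fun σ => ?_)
      have h1 : ∀ k : Fin (1 + 2*n), k ≠ zI n → k ≠ aI n j →
          (σ * Equiv.swap (zI n) (aI n j)) k = σ k := fun k => mul_swap_apply_of_ne σ _ _ k
      have hz : (σ * Equiv.swap (zI n) (aI n j)) (zI n) = σ (aI n j) := by
        simp [Equiv.Perm.mul_apply]
      have ha : (σ * Equiv.swap (zI n) (aI n j)) (aI n j) = σ (zI n) := by
        simp [Equiv.Perm.mul_apply]
      have hb : (σ * Equiv.swap (zI n) (aI n j)) (bI n j) = σ (bI n j) :=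
        h1 _ (bI_ne_zI n j) (Ne.symm (aI_ne_bI n j j))
      rw [← Finset.mul_prod_erase (t \ q)
            (fun i => -(βf (w ((σ * Equiv.swap (zI n) (aI n j)) (bI n i))) *
              lam (w ((σ * Equiv.swap (zI n) (aI n j)) (aI n i))))) hjtq,
          ← Finset.mul_prod_erase (t \ q)
            (fun i => -(βf (w (σ (bI n i))) * lam (w (σ (aI n i))))) hjtq]
      have hq' : (∏ i ∈ q, βf (w ((σ * Equiv.swap (zI n) (aI n j)) (aI n i))) *
            lam (w ((σ * Equiv.swap (zI n) (aI n j)) (bI n i))))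
          = ∏ i ∈ q, βf (w (σ (aI n i))) * lam (w (σ (bI n i))) := by
        refine Finset.prod_congr rfl fun i hi => ?_
        have hij : i ≠ j := fun h => hjq (h ▸ hi)
        rw [h1 _ (aI_ne_zI n i) (aI_inj n hij), h1 _ (bI_ne_zI n i) (Ne.symm (aI_ne_bI n j i))]
      have hq2 : (∏ i ∈ (t \ q).erase j, -(βf (w ((σ * Equiv.swap (zI n) (aI n j)) (bI n i))) *
            lam (w ((σ * Equiv.swap (zI n) (aI n j)) (aI n i)))))
          = ∏ i ∈ (t \ q).erase j, -(βf (w (σ (bI n i))) * lam (w (σ (aI n i)))) := by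
        refine Finset.prod_congr rfl fun i hi => ?_
        have hij : i ≠ j := (Finset.mem_erase.mp hi).1
        rw [h1 _ (aI_ne_zI n i) (aI_inj n hij), h1 _ (bI_ne_zI n i) (Ne.symm (aI_ne_bI n j i))]
      have hq3 : (∏ i ∈ Finset.univ \ t, f * ω (w ((σ * Equiv.swap (zI n) (aI n j)) (aI n i)))
            (w ((σ * Equiv.swap (zI n) (aI n j)) (bI n i))))
          = ∏ i ∈ Finset.univ \ t, f * ω (w (σ (aI n i))) (w (σ (bI n i))) := by
        refine Finset.prod_congr rfl fun i hi => ?_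
        have hij : i ≠ j := fun h => ((Finset.mem_sdiff.mp hi).2 (h ▸ hj))
        rw [h1 _ (aI_ne_zI n i) (aI_inj n hij), h1 _ (bI_ne_zI n i) (Ne.symm (aI_ne_bI n j i))]
      rw [hq', hq2, hq3, hz, ha, hb]
      ring


end SCaux

open SCaux

/-- **The pointwise form of Lemma 3.5 / Lemma 1.11.**
A linear map `T` with `T*λ = f·λ` (`f > 0`) and `T*ω = β ∧ λ + f·ω` which preserves the
contact volume covector `λ ∧ ω^n ≠ 0` must have `f = 1`, i.e. `T*λ = λ`: a contactomorphism
preserving the contact volume form is a strict contactomorphism. -/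
theorem volume_preserving_contact_is_strict
    [FiniteDimensional ℝ V] (n : ℕ) (hdim : finrank ℝ V = 2 * n + 1)
    (lam : V →ₗ[ℝ] ℝ) (ω : V →ₗ[ℝ] V →ₗ[ℝ] ℝ) (halt : ∀ v, ω v v = 0)
    (hvol : wedgeF (oneF lam) (powF (twoF ω) n) ≠ 0)
    (T : V →ₗ[ℝ] V) (f : ℝ) (hf : 0 < f) (β : V →ₗ[ℝ] ℝ)
    (hTlam : ∀ v : V, lam (T v) = f * lam v)
    (hTω : ∀ u v : V, ω (T u) (T v) = β u * lam v - β v * lam u + f * ω u v)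
    (hTvol : (fun v : Fin (1 + 2 * n) → V =>
        wedgeF (oneF lam) (powF (twoF ω) n) (fun i => T (v i)))
      = wedgeF (oneF lam) (powF (twoF ω) n)) :
    f = 1 ∧ ∀ v : V, lam (T v) = lam v := by
  have key : ∀ w : Fin (1 + 2*n) → V,
      wedgeF (oneF lam) (powF (twoF ω) n) (fun i => T (w i))
        = f^(n+1) * wedgeF (oneF lam) (powF (twoF ω) n) w := by
    intro w
    rw [wedge_eq, wedge_eq]
    have hb : bigL (fun x => lam x) (fun x y => ω x y) n (fun i => T (w i))
        = f * bigL (fun x => lam x)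
            (fun x y => β x * lam y - β y * lam x + f * ω x y) n w := by
      unfold bigL
      rw [Finset.mul_sum]
      refine Finset.sum_congr rfl fun σ _ => ?_
      beta_reduce
      rw [hTlam]
      rw [Finset.prod_congr rfl fun i (_ : i ∈ Finset.univ) =>
        hTω (w (σ (aI n i))) (w (σ (bI n i)))]
      ring
    rw [hb, bigL_expand]
    ring
  obtain ⟨w₀, hw₀⟩ : ∃ w : Fin (1 + 2*n) → V,
      wedgeF (oneF lam) (powF (twoF ω) n) w ≠ 0 := by
    by_contra h
    push_neg at h
    exact hvol (funext h)
  have h1 : f^(n+1) * wedgeF (oneF lam) (powF (twoF ω) n) w₀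
      = wedgeF (oneF lam) (powF (twoF ω) n) w₀ := by
    rw [← key w₀]
    exact congrFun hTvol w₀
  have hfn : f^(n+1) = 1 := by
    have := mul_right_cancel₀ hw₀ (h1.trans (one_mul _).symm)
    exact this
  have hf1 : f = 1 := by
    rcases lt_trichotomy f 1 with h | h | h
    · have := pow_lt_one₀ (le_of_lt hf) h (Nat.succ_ne_zero n)
      rw [hfn] at this; exact absurd this (lt_irrefl 1)
    · exact h
    · have := one_lt_pow₀ h (Nat.succ_ne_zero n)
      rw [hfn] at this; exact absurd this (lt_irrefl 1)
  exact ⟨hf1, fun v => by rw [hTlam v, hf1, one_mul]⟩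
end

section
/- Let E be a finite-dimensional real normed vector space, K ⊆ E a compact set, and (f_ν)_{ν ∈ ℕ} a sequence of smooth functions f_ν : E → ℝ. Then there exists a sequence ε : ℕ → ℝ with ε_k > 0 for every k such that for every ν both series ∑_{k=0}^∞ ε_k · sup_{x ∈ K} ‖D^k f_ν(x)‖ and ∑_{k=0}^∞ ε_k · sup_{x ∈ K} ‖D^{k+1} f_ν(x)‖ converge, where D^k f denotes the k-th iterated Fréchet derivative. In particular every f_ν lies in both C^ε and C^{(1,ε)}, so that if (f_ν) is chosen dense in C^∞, the spaces C^ε and C^{(1,ε)} are nonempty and dense. (Proposition 4.4 (1): existence of a Floer weight sequence.) -/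
/-- **Proposition 4.4 (1): existence of a Floer weight sequence.**
Given a compact set `K` in a finite-dimensional normed space and a sequence `(f_ν)` of smooth
functions, there is a sequence of positive weights `ε = (ε_k)` such that for every `ν` both
`∑_k ε_k · sup_K ‖D^k f_ν‖` and `∑_k ε_k · sup_K ‖D^{k+1} f_ν‖` converge; i.e. every `f_ν`
lies in `C^ε` and in `C^{(1,ε)}`. -/
theorem exists_floer_weight_sequence
    {E : Type*} [NormedAddCommGroup E] [NormedSpace ℝ E] [FiniteDimensional ℝ E]
    (K : Set E) (hK : IsCompact K)
    (f : ℕ → E → ℝ) (hf : ∀ ν, ContDiff ℝ (⊤ : ℕ∞) (f ν)) :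
    ∃ ε : ℕ → ℝ, (∀ k, 0 < ε k) ∧ ∀ ν : ℕ,
      Summable (fun k => ε k * ⨆ x : K, ‖iteratedFDeriv ℝ k (f ν) (x : E)‖) ∧
      Summable (fun k => ε k * ⨆ x : K, ‖iteratedFDeriv ℝ (k + 1) (f ν) (x : E)‖) := by
  set M : ℕ → ℕ → ℝ := fun ν k => ⨆ x : K, ‖iteratedFDeriv ℝ k (f ν) (x : E)‖ with hMdef
  have hM : ∀ ν k, 0 ≤ M ν k := fun ν k => Real.iSup_nonneg fun x => norm_nonneg _
  set S : ℕ → ℝ := fun k => ∑ i ∈ Finset.range (k + 1), (M i k + M i (k + 1)) with hSdef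
  have hS : ∀ k, 0 ≤ S k := fun k =>
    Finset.sum_nonneg fun i _ => add_nonneg (hM i k) (hM i (k + 1))
  have hpos : ∀ k, (0:ℝ) < 1 + S k := fun k => by linarith [hS k]
  have hε : ∀ k, (0:ℝ) < (1/2 : ℝ) ^ k / (1 + S k) := fun k =>
    div_pos (by positivity) (hpos k)
  refine ⟨fun k => (1/2 : ℝ) ^ k / (1 + S k), hε, fun ν => ?_⟩
  -- key bound
  have key : ∀ j k : ℕ, ν ≤ k → M ν j ≤ M ν j + M ν (j+1) → M ν j + M ν (j+1) ≤ S k →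
      (1/2 : ℝ) ^ k / (1 + S k) * M ν j ≤ (1/2 : ℝ) ^ k := by
    intro j k _ h1 h2
    have hle : M ν j ≤ 1 + S k := (h1.trans h2).trans (by linarith)
    calc (1/2 : ℝ) ^ k / (1 + S k) * M ν j
        ≤ (1/2 : ℝ) ^ k / (1 + S k) * (1 + S k) :=
          mul_le_mul_of_nonneg_left hle (hε k).le
      _ = (1/2 : ℝ) ^ k := div_mul_cancel₀ _ (hpos k).ne'
  have sumS : ∀ j k : ℕ, ν ≤ k → j = k ∨ j = k + 1 → M ν j + M ν (j.succ) ≤ S k ∨ True := by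
    intro _ _ _ _; right; trivial
  have hmem : ∀ k, ν ≤ k → M ν k + M ν (k+1) ≤ S k := by
    intro k hk
    exact Finset.single_le_sum (f := fun i => M i k + M i (k+1))
      (fun i _ => add_nonneg (hM i k) (hM i (k+1)))
      (Finset.mem_range.mpr (Nat.lt_succ_of_le hk))
  have geo : Summable (fun k : ℕ => (1/2 : ℝ) ^ (k + ν)) := by
    simpa [pow_add, mul_comm] using (summable_geometric_of_lt_one (by norm_num : (0:ℝ) ≤ 1/2)
      (by norm_num : (1/2:ℝ) < 1)).mul_right ((1/2 : ℝ) ^ ν)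
  constructor
  · rw [← summable_nat_add_iff ν]
    apply geo.of_nonneg_of_le
    · intro k; exact mul_nonneg (hε _).le (hM ν (k + ν))
    · intro k
      exact key (k + ν) (k + ν) (Nat.le_add_left _ _)
        (le_add_of_nonneg_right (hM ν _)) (hmem _ (Nat.le_add_left _ _))
  · rw [← summable_nat_add_iff ν]
    apply geo.of_nonneg_of_le
    · intro k; exact mul_nonneg (hε _).le (hM ν (k + ν + 1))
    · intro k
      have h2 : M ν (k + ν + 1) ≤ M ν (k+ν) + M ν (k + ν + 1) :=
        le_add_of_nonneg_left (hM ν _)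
      have := hmem (k + ν) (Nat.le_add_left _ _)
      have hle : M ν (k + ν + 1) ≤ 1 + S (k + ν) := by linarith
      calc (1/2 : ℝ) ^ (k+ν) / (1 + S (k+ν)) * M ν (k + ν + 1)
          ≤ (1/2 : ℝ) ^ (k+ν) / (1 + S (k+ν)) * (1 + S (k+ν)) :=
            mul_le_mul_of_nonneg_left hle (hε _).le
        _ = (1/2 : ℝ) ^ (k+ν) := div_mul_cancel₀ _ (hpos _).ne'
end
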